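/- Let L be a complete lattice, regarded as a complete meet-semilattice. The set Γ of all non-generators of L (with respect to complete-subsemilattice generation) equals the intersection of all maximal proper complete subsemilattices of L (where this intersection is taken to be all of L if there are no maximal proper complete subsemilattices). -/
import Mathlib


/-- A complete subsemilattice of a complete lattice: a subset closed under
arbitrary infima computed in `L` (including the empty infimum, so it contains `⊤`). -/
def IsCompleteSubsemilattice {L : Type*} [CompleteLattice L] (S : Set L) : Prop :=
  ∀ Y : Set L, Y ⊆ S → sInf Y ∈ S

/-- The complete subsemilattice generated by `X`: the intersection of all
complete subsemilattices containing `X`. -/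
def semiGen {L : Type*} [CompleteLattice L] (X : Set L) : Set L :=
  ⋂₀ {S : Set L | IsCompleteSubsemilattice S ∧ X ⊆ S}

/-- `a` is a non-generator (w.r.t. complete-subsemilattice generation). -/
def IsSemiNonGenerator {L : Type*} [CompleteLattice L] (a : L) : Prop :=
  ∀ X : Set L, semiGen (X ∪ {a}) = Set.univ → semiGen X = Set.univ


/-- A maximal proper complete subsemilattice. -/
def IsMaxProperSubsemilattice {L : Type*} [CompleteLattice L] (P : Set L) : Prop :=
  IsCompleteSubsemilattice P ∧ P ≠ Set.univ ∧
    ∀ Q : Set L, IsCompleteSubsemilattice Q → Q ≠ Set.univ → P ⊆ Q → P = Q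

section Aux

variable {L : Type*} [CompleteLattice L]

lemma subset_semiGen (X : Set L) : X ⊆ semiGen X :=
  fun x hx => Set.mem_sInter.2 fun _ hS => hS.2 hx

lemma semiGen_closed (X : Set L) : IsCompleteSubsemilattice (semiGen X) := by
  intro Y hY
  refine Set.mem_sInter.2 fun S hS => ?_
  exact hS.1 Y (fun y hy => Set.mem_sInter.1 (hY hy) S hS)

lemma semiGen_subset {X S : Set L} (h : IsCompleteSubsemilattice S) (hXS : X ⊆ S) :
    semiGen X ⊆ S :=
  fun x hx => Set.mem_sInter.1 hx S ⟨h, hXS⟩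

lemma semiGen_of_closed {S : Set L} (h : IsCompleteSubsemilattice S) : semiGen S = S :=
  Set.Subset.antisymm (semiGen_subset h subset_rfl) (subset_semiGen S)

lemma mem_semiGen {X : Set L} {b : L} : b ∈ semiGen X ↔ ∃ Y, Y ⊆ X ∧ sInf Y = b := by
  constructor
  · intro hb
    have hclosed : IsCompleteSubsemilattice {b : L | ∃ Y, Y ⊆ X ∧ sInf Y = b} := by
      intro Z hZ
      refine ⟨{x ∈ X | ∃ z ∈ Z, z ≤ x}, fun x hx => hx.1, le_antisymm ?_ ?_⟩
      · refine le_sInf fun z hz => ?_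
        obtain ⟨Y, hYX, hYz⟩ := hZ hz
        calc sInf {x ∈ X | ∃ z ∈ Z, z ≤ x} ≤ sInf Y := by
              refine sInf_le_sInf fun y hy => ⟨hYX hy, z, hz, ?_⟩
              exact hYz ▸ sInf_le hy
          _ = z := hYz
      · refine le_sInf fun w hw => ?_
        obtain ⟨_, z, hz, hzw⟩ := hw
        exact le_trans (sInf_le hz) hzw
    have hsub : X ⊆ {b : L | ∃ Y, Y ⊆ X ∧ sInf Y = b} :=
      fun x hx => ⟨{x}, Set.singleton_subset_iff.2 hx, sInf_singleton⟩
    exact semiGen_subset hclosed hsub hb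
  · rintro ⟨Y, hYX, rfl⟩
    exact semiGen_closed X Y (fun y hy => subset_semiGen X (hYX hy))

end Aux

/-- The set of non-generators of a complete (meet-)semilattice equals the intersection of
all maximal proper complete subsemilattices (the empty intersection being all of `L`). -/
theorem semiNonGenerators_eq_sInter_maxProper {L : Type*} [CompleteLattice L] :
    {a : L | IsSemiNonGenerator a} = ⋂₀ {P : Set L | IsMaxProperSubsemilattice P} := by
  ext a
  simp only [Set.mem_setOf_eq, Set.mem_sInter, Set.mem_setOf_eq]
  constructor
  · -- non-generator lies in every maximal proper complete subsemilattice
    intro hng P hP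
    by_contra haP
    have hPclosed := hP.1
    have hPsub : P ⊆ semiGen (P ∪ {a}) :=
      subset_trans Set.subset_union_left (subset_semiGen _)
    have haQ : a ∈ semiGen (P ∪ {a}) :=
      subset_semiGen _ (Set.mem_union_right _ rfl)
    have hQuniv : semiGen (P ∪ {a}) = Set.univ := by
      by_contra hne
      have := hP.2.2 _ (semiGen_closed _) hne hPsub
      exact haP (this ▸ haQ)
    have := hng P hQuniv
    rw [semiGen_of_closed hPclosed] at this
    exact hP.2.1 this
  · -- element of every maximal proper complete subsemilattice is a non-generator
    intro hmem X hXa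
    by_contra hM
    set M := semiGen X with hMdef
    have hMclosed : IsCompleteSubsemilattice M := semiGen_closed X
    have haM : a ∉ M := by
      intro ha
      apply hM
      have : X ∪ {a} ⊆ M := by
        refine Set.union_subset (subset_semiGen X) ?_
        simpa using ha
      have h1 : semiGen (X ∪ {a}) ⊆ M := semiGen_subset hMclosed this
      rw [hXa] at h1
      exact Set.eq_univ_of_univ_subset h1
    -- any closed set containing M and a is everything
    have key : ∀ S : Set L, IsCompleteSubsemilattice S → M ⊆ S → a ∈ S → S = Set.univ := by
      intro S hS hMS haS
      have : X ∪ {a} ⊆ S := by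
        refine Set.union_subset (subset_trans (subset_semiGen X) hMS) ?_
        simpa using haS
      have h1 : semiGen (X ∪ {a}) ⊆ S := semiGen_subset hS this
      rw [hXa] at h1
      exact Set.eq_univ_of_univ_subset h1
    -- the union of all closed sets containing M and avoiding a, then its closure
    set U : Set L := ⋃₀ {S : Set L | IsCompleteSubsemilattice S ∧ M ⊆ S ∧ a ∉ S} with hU
    set P : Set L := semiGen U with hPdef
    have hPclosed : IsCompleteSubsemilattice P := semiGen_closed U
    have hMU : M ⊆ U := fun m hm => Set.mem_sUnion.2 ⟨M, ⟨hMclosed, subset_rfl, haM⟩, hm⟩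
    have hMP : M ⊆ P := subset_trans hMU (subset_semiGen U)
    have haP : a ∉ P := by
      intro ha
      obtain ⟨Y, hYU, hYa⟩ := mem_semiGen.1 ha
      have hYM : Y ⊆ M := by
        intro y hy
        obtain ⟨S, ⟨hSclosed, hMS, haS⟩, hyS⟩ := Set.mem_sUnion.1 (hYU hy)
        have hay : a ≤ y := hYa ▸ sInf_le hy
        -- y is in semiGen (X ∪ {a}) = univ, so y = sInf Z for some Z ⊆ X ∪ {a}
        have hy' : y ∈ semiGen (X ∪ {a}) := by rw [hXa]; trivial
        obtain ⟨Z, hZ, hZy⟩ := mem_semiGen.1 hy'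
        by_cases haZ : a ∈ Z
        · have hya : y ≤ a := hZy ▸ sInf_le haZ
          have : y = a := le_antisymm hya hay
          exact absurd (this ▸ hyS) haS
        · have hZX : Z ⊆ X := fun z hz => (hZ hz).resolve_right (by
            intro h; exact haZ (by simpa using (Set.mem_singleton_iff.1 h ▸ hz)))
          exact mem_semiGen.2 ⟨Z, hZX, hZy⟩
      have : a ∈ M := hYa ▸ hMclosed Y hYM
      exact haM this
    have hPne : P ≠ Set.univ := fun h => haP (h ▸ Set.mem_univ a)
    -- P is a maximal proper complete subsemilattice
    have hPmax : IsMaxProperSubsemilattice P := by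
      refine ⟨hPclosed, hPne, fun Q hQclosed hQne hPQ => ?_⟩
      have hMQ : M ⊆ Q := subset_trans hMP hPQ
      have haQ : a ∉ Q := fun haQ => hQne (key Q hQclosed hMQ haQ)
      have hQU : Q ⊆ U := fun q hq => Set.mem_sUnion.2 ⟨Q, ⟨hQclosed, hMQ, haQ⟩, hq⟩
      exact Set.Subset.antisymm hPQ (subset_trans hQU (subset_semiGen U))
    exact haP (hmem P hPmax)
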